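/- Fixed-point lemma for tree codes: for every continuous function F : (List ℕ → ℕ) → (List ℕ → ℕ) there exists α : List ℕ → ℕ (with values in {0,1}) such that for every β : ℕ → ℕ: there exists n with α [β 0, …, β (n-1)] ≠ 0 if and only if there exists n with (F α) [β 0, …, β (n-1)] ≠ 0. Consequently α ∈ A¹₁ ↔ F α ∈ A¹₁ and α ∈ E¹₁ ↔ F α ∈ E¹₁. -/

import Mathlib

/-- The initial segment `[β 0, …, β (n-1)]` of an infinite sequence `β`. -/
def seg (β : ℕ → ℕ) (n : ℕ) : List ℕ := (List.range n).map β

/-- The set of ill-founded tree codes. -/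
def E11 : Set (List ℕ → ℕ) := {γ | ∃ β : ℕ → ℕ, ∀ n, γ (seg β n) = 0}

/-- The set of well-founded tree codes. -/
def A11 : Set (List ℕ → ℕ) := {γ | ∀ β : ℕ → ℕ, ∃ n, γ (seg β n) ≠ 0}


/-!
Enumerate the finite sequences and decide `α s` in the order of their codes: `α s = 1` exactly
when some prefix `t` of `s` has `F γ t ≠ 0` for every `γ` that agrees with the values of `α`
already decided. Then `α s ≠ 0` yields a prefix of `s` in the support of `F α`. Conversely,
if `F α (seg β n) ≠ 0`, continuity makes this value depend on finitely many values of `α`, and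
a long enough initial segment `seg β m` is enumerated after all of them, so `α (seg β m) = 1`.
-/

open Encodable Filter

theorem Continuous.exists_finset_eq_of_agree {ι Z : Type*} {Y : ι → Type*}
    [∀ i, TopologicalSpace (Y i)] [∀ i, DiscreteTopology (Y i)]
    [TopologicalSpace Z] [DiscreteTopology Z] {G : (∀ i, Y i) → Z} (hG : Continuous G)
    (x : ∀ i, Y i) : ∃ I : Finset ι, ∀ y, (∀ i ∈ I, y i = x i) → G y = G x := by
  obtain ⟨I, u, hu, hsub⟩ :=
    isOpen_pi_iff.mp (hG.isOpen_preimage {G x} (isOpen_discrete _)) x rfl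
  exact ⟨I, fun y hy => hsub fun i hi => hy i hi ▸ (hu i hi).2⟩

theorem seg_length (β : ℕ → ℕ) (n : ℕ) : (seg β n).length = n := by
  simp [seg]

theorem seg_prefix_seg (β : ℕ → ℕ) {m n : ℕ} (h : m ≤ n) : seg β m <+: seg β n := by
  simpa [seg, ← List.map_take, List.take_range, h] using List.take_prefix m (seg β n)

theorem eq_seg_of_prefix_seg {β : ℕ → ℕ} {n : ℕ} {t : List ℕ} (h : t <+: seg β n) :
    t = seg β t.length := by
  have hlen : t.length ≤ n := seg_length β n ▸ h.length_le
  rw [List.prefix_iff_eq_take.mp h]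
  simp [seg, ← List.map_take, List.take_range, hlen]

theorem exists_ge_lt_encode_seg (β : ℕ → ℕ) (n K : ℕ) :
    ∃ m, n ≤ m ∧ K < encode (seg β m) := by
  have hinj : Function.Injective fun m => encode (seg β m) := fun a b hab => by
    simpa [seg_length] using congrArg List.length (encode_injective hab)
  exact ((eventually_ge_atTop n).and (hinj.nat_tendsto_atTop.eventually_gt_atTop K)).exists

open Classical in
noncomputable def fixedCode (F : (List ℕ → ℕ) → List ℕ → ℕ) (s : List ℕ) : ℕ :=
  if ∃ t, t <+: s ∧ ∀ γ : List ℕ → ℕ,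
      (∀ s', encode s' < encode s → γ s' = fixedCode F s') → F γ t ≠ 0 then 1 else 0
termination_by encode s

section fixedCode

variable (F : (List ℕ → ℕ) → List ℕ → ℕ)

theorem fixedCode_eq_zero_or_one (s : List ℕ) : fixedCode F s = 0 ∨ fixedCode F s = 1 := by
  rw [fixedCode]
  split_ifs <;> simp

theorem exists_image_seg_ne_zero_of_fixedCode_seg_ne_zero {β : ℕ → ℕ} {n : ℕ}
    (h : fixedCode F (seg β n) ≠ 0) : ∃ m, F (fixedCode F) (seg β m) ≠ 0 := by
  rw [fixedCode] at h
  split_ifs at h with hforced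
  · obtain ⟨t, ht, hF⟩ := hforced
    exact ⟨t.length, eq_seg_of_prefix_seg ht ▸ hF _ fun _ _ => rfl⟩
  · exact absurd rfl h

theorem exists_fixedCode_seg_ne_zero_of_image_seg_ne_zero (hF : Continuous F)
    {β : ℕ → ℕ} {n : ℕ} (h : F (fixedCode F) (seg β n) ≠ 0) : ∃ m, fixedCode F (seg β m) ≠ 0 := by
  obtain ⟨I, hI⟩ := ((continuous_apply (seg β n)).comp hF).exists_finset_eq_of_agree
    (fixedCode F)
  obtain ⟨m, hnm, hm⟩ := exists_ge_lt_encode_seg β n (I.sup encode)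
  have hforced (γ : List ℕ → ℕ)
      (hγ : ∀ s, encode s < encode (seg β m) → γ s = fixedCode F s) :
      F γ (seg β n) ≠ 0 :=
    (hI γ fun s hs => hγ s ((Finset.le_sup hs).trans_lt hm)).trans_ne h
  refine ⟨m, ?_⟩
  rw [fixedCode, if_pos ⟨seg β n, seg_prefix_seg β hnm, hforced⟩]
  exact one_ne_zero

end fixedCode

theorem mem_A11_iff_of_forbids_iff {α γ : List ℕ → ℕ}
    (h : ∀ β, (∃ n, α (seg β n) ≠ 0) ↔ ∃ n, γ (seg β n) ≠ 0) : α ∈ A11 ↔ γ ∈ A11 :=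
  forall_congr' h

theorem mem_E11_iff_of_forbids_iff {α γ : List ℕ → ℕ}
    (h : ∀ β, (∃ n, α (seg β n) ≠ 0) ↔ ∃ n, γ (seg β n) ≠ 0) : α ∈ E11 ↔ γ ∈ E11 := by
  simpa only [E11, Set.mem_ofPred_eq, not_exists, not_not] using
    exists_congr fun β => (h β).not

/-- Fixed-point lemma for tree codes: every continuous operation on tree codes
has a `{0,1}`-valued code that forbids exactly the same infinite paths as its
image; consequently it belongs to `A¹₁` (resp. `E¹₁`) iff its image does. -/
theorem fixed_point_tree_codes (F : (List ℕ → ℕ) → (List ℕ → ℕ))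
    (hF : Continuous F) :
    ∃ α : List ℕ → ℕ, (∀ s, α s = 0 ∨ α s = 1) ∧
      (∀ β : ℕ → ℕ, (∃ n, α (seg β n) ≠ 0) ↔ ∃ n, F α (seg β n) ≠ 0) ∧
      (α ∈ A11 ↔ F α ∈ A11) ∧ (α ∈ E11 ↔ F α ∈ E11) := by
  have hforbids (β : ℕ → ℕ) :
      (∃ n, fixedCode F (seg β n) ≠ 0) ↔ ∃ n, F (fixedCode F) (seg β n) ≠ 0 :=
    ⟨fun ⟨_, h⟩ => exists_image_seg_ne_zero_of_fixedCode_seg_ne_zero F h,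
      fun ⟨_, h⟩ => exists_fixedCode_seg_ne_zero_of_image_seg_ne_zero F hF h⟩
  exact ⟨fixedCode F, fixedCode_eq_zero_or_one F, hforbids,
    mem_A11_iff_of_forbids_iff hforbids, mem_E11_iff_of_forbids_iff hforbids⟩
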